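/- Suppose d = d₁d₂⋯d_n with d₁ = 2 or d₁ = 3, and d₁ ≤ d_r for all r = 2…n. Then any collection of pairwise mutually unbiased orthonormal product bases of ℂ^{d₁} ⊗ ⋯ ⊗ ℂ^{d_n} contains at most d₁ + 1 bases. -/

import Mathlib

/-!
The first tensor factors of the vectors of a product basis of `ℂ^{d₁} ⊗ K` form a tight frame of
`ℂ^{d₁}` with bound `dim K`, and the remaining factors form a tight frame of `K` with bound `d₁`.
For two mutually unbiased product bases with vectors `a ⊗ A` and `b_j ⊗ B_j`, the numbers
`t_j = |⟨a, b_j⟩|²` and `q_j = |⟨A, B_j⟩|²` therefore satisfy `t_j q_j = 1/d`, `∑ t_j = dim K` and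
`∑ q_j = d₁`: this is the equality case of Cauchy–Schwarz, which forces `t_j = 1/d₁`. So the first
factors of distinct bases are mutually unbiased in `ℂ^{d₁}`.

For such spanning, pairwise unbiased families of unit vectors in `ℂ^{d₁}`, the traceless projectors
`|u⟩⟨u| - I/d₁` of different families are orthogonal in the Hilbert–Schmidt inner product and are
orthogonal to `I`, while those of one family span at least `d₁ - 1` dimensions. Counting dimensions
in the `d₁²`-dimensional space of matrices gives `m (d₁ - 1) + 1 ≤ d₁²`, i.e. `m ≤ d₁ + 1`.
-/

open scoped ComplexInnerProductSpace

/-- The tensor product `ψ¹ ⊗ ⋯ ⊗ ψⁿ` of `n` vectors, realized concretely on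
`EuclideanSpace`: its component at the multi-index `f` is `∏ r, ψ r (f r)`. -/
noncomputable def eprodPi {n : ℕ} {D : Fin n → ℕ}
    (ψ : (r : Fin n) → EuclideanSpace ℂ (Fin (D r))) :
    EuclideanSpace ℂ ((r : Fin n) → Fin (D r)) :=
  WithLp.toLp 2 (fun f => ∏ r, ψ r (f r))

open Module Submodule

section TightFrame

variable {E F : Type*} [NormedAddCommGroup E] [InnerProductSpace ℂ E]
  [NormedAddCommGroup F] [InnerProductSpace ℂ F] {J : Type*} [Fintype J]

def IsTightFrame (c : ℝ) (v : J → E) : Prop :=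
  ∀ x y, ∑ j, ⟪x, v j⟫ * ⟪v j, y⟫ = c * ⟪x, y⟫

lemma inner_mul_inner_swap_eq_sq_norm (x y : E) : ⟪x, y⟫ * ⟪y, x⟫ = ((‖⟪x, y⟫‖ ^ 2 : ℝ) : ℂ) := by
  rw [← inner_conj_symm y x, Complex.mul_conj, Complex.normSq_eq_norm_sq]

lemma Orthonormal.isTightFrame_one [FiniteDimensional ℂ E] {v : J → E} (hv : Orthonormal ℂ v)
    (hcard : Fintype.card J = finrank ℂ E) : IsTightFrame 1 v := by
  intro x y
  have hspan := hv.linearIndependent.span_eq_top_of_card_eq_finrank' hcard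
  simpa using (OrthonormalBasis.mk hv hspan.ge).sum_inner_mul_inner x y

lemma IsTightFrame.map {c : ℝ} {v : J → E} (hv : IsTightFrame c v) (f : E ≃ₗᵢ[ℂ] F) :
    IsTightFrame c fun j => f (v j) := by
  intro x y
  simpa only [← f.inner_map_map, f.apply_symm_apply] using hv (f.symm x) (f.symm y)

lemma IsTightFrame.sum_sq_norm_inner {c : ℝ} {v : J → E} (hv : IsTightFrame c v) (x : E) :
    ∑ j, ‖⟪x, v j⟫‖ ^ 2 = c * ‖x‖ ^ 2 := by
  have h := hv x x
  simp only [inner_mul_inner_swap_eq_sq_norm, inner_self_eq_norm_sq_to_K,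
    RCLike.ofReal_eq_complex_ofReal] at h
  exact_mod_cast h

lemma IsTightFrame.span_eq_top {c : ℝ} (hc : c ≠ 0) {v : J → E} (hv : IsTightFrame c v) :
    span ℂ (Set.range v) = ⊤ := by
  have := FiniteDimensional.span_of_finite ℂ (Set.finite_range v)
  rw [← orthogonal_eq_bot_iff, eq_bot_iff]
  intro x hx
  have h := hv.sum_sq_norm_inner x
  simp only [inner_left_of_mem_orthogonal (subset_span (Set.mem_range_self _)) hx, norm_zero] at h
  simpa [hc] using h.symm

end TightFrame

-- The equality case of Cauchy–Schwarz `∑ √(t q) ≤ √(∑ t · ∑ q)`.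
lemma eq_sum_div_card_of_mul_eq_of_sum_mul_sum_eq {J : Type*} [Fintype J] {t q : J → ℝ}
    {μ : ℝ} (ht : ∀ j, 0 ≤ t j) (hμ : 0 < μ) (htq : ∀ j, t j * q j = μ)
    (hsum : (∑ j, t j) * ∑ j, q j = Fintype.card J ^ 2 * μ) (j : J) :
    t j = (∑ j, t j) / Fintype.card J := by
  set N : ℝ := (Fintype.card J : ℝ)
  set c := (∑ j, t j) / N
  have hN : 0 < N := by
    have := Fintype.card_pos_iff.mpr ⟨j⟩
    positivity
  have htpos : ∀ j, 0 < t j := fun j => (ht j).lt_of_ne fun h => by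
    have := htq j
    rw [← h, zero_mul] at this
    exact hμ.ne this
  have hterm : ∀ j, (t j - c) ^ 2 / t j = t j - 2 * c + c ^ 2 / μ * q j := fun j => by
    have := (htpos j).ne'
    rw [show q j = μ / t j by rw [eq_div_iff this, mul_comm, htq j]]
    field_simp
    ring
  have hzero : ∑ j, (t j - c) ^ 2 / t j = 0 := by
    rw [Finset.sum_congr rfl fun j _ => hterm j, Finset.sum_add_distrib, Finset.sum_sub_distrib,
      ← Finset.mul_sum _ q]
    simp only [Finset.sum_const, Finset.card_univ, nsmul_eq_mul, c]
    field_simp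
    linear_combination (∑ j, t j) * hsum
  have := (Finset.sum_eq_zero_iff_of_nonneg fun j _ => div_nonneg (sq_nonneg _) (ht j)).mp hzero j
    (Finset.mem_univ j)
  rw [div_eq_zero_iff, sq_eq_zero_iff, sub_eq_zero] at this
  exact this.resolve_right (htpos j).ne'

section Tensor

variable {ι κ J : Type*} [Fintype ι] [Fintype κ] [Fintype J]

def tensorVec (u : EuclideanSpace ℂ ι) (v : EuclideanSpace ℂ κ) : EuclideanSpace ℂ (ι × κ) :=
  WithLp.toLp 2 fun p => u p.1 * v p.2

lemma inner_tensorVec (u u' : EuclideanSpace ℂ ι) (v v' : EuclideanSpace ℂ κ) :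
    ⟪tensorVec u v, tensorVec u' v'⟫ = ⟪u, u'⟫ * ⟪v, v'⟫ := by
  simp only [PiLp.inner_apply, RCLike.inner_apply', tensorVec, Fintype.sum_prod_type,
    Finset.sum_mul_sum, map_mul]
  exact Finset.sum_congr rfl fun _ _ => Finset.sum_congr rfl fun _ _ => by ring

lemma norm_tensorVec (u : EuclideanSpace ℂ ι) (v : EuclideanSpace ℂ κ) :
    ‖tensorVec u v‖ = ‖u‖ * ‖v‖ := by
  have h := inner_tensorVec u u v v
  simp only [inner_self_eq_norm_sq_to_K, RCLike.ofReal_eq_complex_ofReal] at h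
  rw [← mul_pow] at h
  exact (pow_left_inj₀ (norm_nonneg _) (by positivity) two_ne_zero).mp (by exact_mod_cast h)

lemma tensorVec_swap (u : EuclideanSpace ℂ ι) (v : EuclideanSpace ℂ κ) :
    LinearIsometryEquiv.piLpCongrLeft 2 ℂ ℂ (Equiv.prodComm ι κ) (tensorVec u v) =
      tensorVec v u := by
  ext p
  simp [tensorVec, LinearIsometryEquiv.piLpCongrLeft_apply, mul_comm]

lemma IsTightFrame.of_tensorVec_left {c : ℝ} {u : J → EuclideanSpace ℂ ι}
    {v : J → EuclideanSpace ℂ κ} (h : IsTightFrame c fun j => tensorVec (u j) (v j))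
    (hv : ∀ j, ‖v j‖ = 1) : IsTightFrame (c * Fintype.card κ) u := by
  intro x y
  push_cast
  let e := EuclideanSpace.basisFun κ ℂ
  have hv' : ∀ j, ∑ k, ⟪e k, v j⟫ * ⟪v j, e k⟫ = 1 := fun j => by
    simp [mul_comm ⟪e _, v j⟫, e.sum_inner_mul_inner, inner_self_eq_norm_sq_to_K, hv j]
  calc ∑ j, ⟪x, u j⟫ * ⟪u j, y⟫
      = ∑ k, ∑ j, ⟪tensorVec x (e k), tensorVec (u j) (v j)⟫ *
          ⟪tensorVec (u j) (v j), tensorVec y (e k)⟫ := by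
        rw [Finset.sum_comm]
        refine Finset.sum_congr rfl fun j _ => ?_
        simp only [inner_tensorVec]
        conv_lhs => rw [← mul_one (⟪x, u j⟫ * ⟪u j, y⟫), ← hv' j, Finset.mul_sum]
        exact Finset.sum_congr rfl fun _ _ => by ring
    _ = ∑ k, c * ⟪tensorVec x (e k), tensorVec y (e k)⟫ := Finset.sum_congr rfl fun _ _ => h _ _
    _ = c * Fintype.card κ * ⟪x, y⟫ := by
        simp [inner_tensorVec, inner_self_eq_norm_sq_to_K, e.orthonormal.1]
        ring

lemma IsTightFrame.of_tensorVec_right {c : ℝ} {u : J → EuclideanSpace ℂ ι}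
    {v : J → EuclideanSpace ℂ κ} (h : IsTightFrame c fun j => tensorVec (u j) (v j))
    (hu : ∀ j, ‖u j‖ = 1) : IsTightFrame (c * Fintype.card ι) v := by
  have := h.map (LinearIsometryEquiv.piLpCongrLeft 2 ℂ ℂ (Equiv.prodComm ι κ))
  simp only [tensorVec_swap] at this
  exact this.of_tensorVec_left hu

lemma sq_norm_inner_eq_of_unbiased_tensorVec {b : J → EuclideanSpace ℂ ι}
    {B : J → EuclideanSpace ℂ κ} (hframe : IsTightFrame 1 fun j => tensorVec (b j) (B j))
    (hb : ∀ j, ‖b j‖ = 1) (hB : ∀ j, ‖B j‖ = 1)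
    (hJ : Fintype.card J = Fintype.card ι * Fintype.card κ)
    {a : EuclideanSpace ℂ ι} {A : EuclideanSpace ℂ κ} (ha : ‖a‖ = 1) (hA : ‖A‖ = 1)
    (hMU : ∀ j, ‖⟪tensorVec a A, tensorVec (b j) (B j)⟫‖ ^ 2 = 1 / Fintype.card J) (j : J) :
    ‖⟪a, b j⟫‖ ^ 2 = 1 / Fintype.card ι := by
  have hsum_a := (hframe.of_tensorVec_left hB).sum_sq_norm_inner a
  have hsum_A := (hframe.of_tensorVec_right hb).sum_sq_norm_inner A
  rw [ha, one_pow, mul_one, one_mul] at hsum_a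
  rw [hA, one_pow, mul_one, one_mul] at hsum_A
  have hJpos : (0 : ℝ) < Fintype.card J := by
    have := Fintype.card_pos_iff.mpr ⟨j⟩
    positivity
  have hκ : (Fintype.card κ : ℝ) ≠ 0 := by
    intro h
    rw [hJ, Nat.cast_mul, h, mul_zero] at hJpos
    exact hJpos.false
  have key := eq_sum_div_card_of_mul_eq_of_sum_mul_sum_eq (t := fun j => ‖⟪a, b j⟫‖ ^ 2)
    (q := fun j => ‖⟪A, B j⟫‖ ^ 2) (fun _ => by positivity) (one_div_pos.mpr hJpos)
    (fun j => by rw [← mul_pow, ← norm_mul, ← inner_tensorVec, hMU]) (by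
      rw [hsum_a, hsum_A, hJ]
      push_cast
      field_simp) j
  rw [key, hsum_a, hJ]
  push_cast
  field_simp

end Tensor

lemma OrthogonalFamily.sum_finrank_le {𝕜 E β : Type*} [RCLike 𝕜] [NormedAddCommGroup E]
    [InnerProductSpace 𝕜 E] [FiniteDimensional 𝕜 E] [Fintype β] {V : β → Submodule 𝕜 E}
    (hV : OrthogonalFamily 𝕜 (fun b => V b) fun b => (V b).subtypeₗᵢ) :
    ∑ b, finrank 𝕜 (V b) ≤ finrank 𝕜 E := by
  simpa using (hV.orthonormal_sigma_orthonormal fun b =>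
    (stdOrthonormalBasis 𝕜 (V b)).orthonormal).linearIndependent.fintype_card_le_finrank

section MutuallyUnbiased

variable {ι : Type*} [Fintype ι]

/- Matrices on `ℂ^ι` are modelled as vectors of `ℂ^{ι × ι}`, whose inner product is then the
Hilbert–Schmidt one; `outerVec u` is the matrix `|u⟩⟨u|`. -/
noncomputable def outerVec (u : EuclideanSpace ℂ ι) : EuclideanSpace ℂ (ι × ι) :=
  tensorVec u (WithLp.toLp 2 (star (WithLp.ofLp u)))

noncomputable def identityVec : EuclideanSpace ℂ (ι × ι) :=
  ∑ k, outerVec (EuclideanSpace.basisFun ι ℂ k)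

noncomputable def tracelessOuterVec (u : EuclideanSpace ℂ ι) : EuclideanSpace ℂ (ι × ι) :=
  outerVec u - (Fintype.card ι : ℂ)⁻¹ • identityVec

lemma inner_outerVec (u u' : EuclideanSpace ℂ ι) :
    ⟪outerVec u, outerVec u'⟫ = ⟪u, u'⟫ * ⟪u', u⟫ := by
  rw [outerVec, outerVec, inner_tensorVec]
  congr 1
  rw [EuclideanSpace.inner_toLp_toLp, star_star, dotProduct_comm]
  rfl

lemma inner_identityVec_outerVec (u : EuclideanSpace ℂ ι) :
    ⟪identityVec, outerVec u⟫ = ⟪u, u⟫ := by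
  simp only [identityVec, sum_inner, inner_outerVec]
  simpa [mul_comm] using (EuclideanSpace.basisFun ι ℂ).sum_inner_mul_inner u u

lemma inner_identityVec_identityVec :
    ⟪(identityVec : EuclideanSpace ℂ (ι × ι)), identityVec⟫ = Fintype.card ι := by
  nth_rw 2 [identityVec]
  simp [inner_identityVec_outerVec, inner_self_eq_norm_sq_to_K,
    (EuclideanSpace.basisFun ι ℂ).orthonormal.1]

lemma inner_identityVec_tracelessOuterVec {u : EuclideanSpace ℂ ι} (hu : ‖u‖ = 1) :
    ⟪identityVec, tracelessOuterVec u⟫ = 0 := by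
  have : Nonempty ι := by
    by_contra h
    rw [not_nonempty_iff] at h
    simp [Subsingleton.elim u 0] at hu
  have huu : ⟪u, u⟫ = 1 := by simp [inner_self_eq_norm_sq_to_K, hu]
  simp only [tracelessOuterVec, inner_sub_right, inner_smul_right, inner_identityVec_outerVec,
    inner_identityVec_identityVec, huu]
  field_simp
  ring

lemma inner_tracelessOuterVec_eq_zero {u u' : EuclideanSpace ℂ ι} (hu : ‖u‖ = 1)
    (hu' : ‖u'‖ = 1) (h : ‖⟪u, u'⟫‖ ^ 2 = 1 / Fintype.card ι) :
    ⟪tracelessOuterVec u, tracelessOuterVec u'⟫ = 0 := by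
  have huu : ⟪u, u⟫ = 1 := by simp [inner_self_eq_norm_sq_to_K, hu]
  have huu' : ⟪u', u'⟫ = 1 := by simp [inner_self_eq_norm_sq_to_K, hu']
  have hI : ⟪outerVec u, identityVec⟫ = 1 := by
    rw [← inner_conj_symm, inner_identityVec_outerVec, huu, map_one]
  simp only [tracelessOuterVec, inner_sub_left, inner_sub_right, inner_smul_left, inner_smul_right,
    inner_outerVec, inner_mul_inner_swap_eq_sq_norm, h, inner_identityVec_outerVec, huu', hI,
    inner_identityVec_identityVec]
  push_cast
  rcases eq_or_ne (Fintype.card ι : ℂ) 0 with h0 | h0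
  · simp [h0]
  · field_simp
    ring

lemma card_le_finrank_span_outerVec {J : Type*} {w : J → EuclideanSpace ℂ ι}
    (hw : span ℂ (Set.range w) = ⊤) :
    Fintype.card ι ≤ finrank ℂ (span ℂ (Set.range fun j => outerVec (w j))) := by
  obtain ⟨K, a, -, hspan, hli⟩ := exists_linearIndependent' ℂ fun j => outerVec (w j)
  have : Fintype K := @Fintype.ofFinite _ hli.finite
  rw [← hspan, finrank_span_eq_card hli]
  suffices hwa : span ℂ (Set.range (w ∘ a)) = ⊤ by
    have := finrank_range_le_card (R := ℂ) (w ∘ a)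
    rwa [Set.finrank, hwa, finrank_top, finrank_euclideanSpace] at this
  have hperp : ∀ x, x ∈ (span ℂ (Set.range (w ∘ a)))ᗮ → ∀ j, ⟪x, w j⟫ = 0 := by
    intro x hx j
    have hle : span ℂ (Set.range ((fun j => outerVec (w j)) ∘ a)) ≤ (ℂ ∙ outerVec x)ᗮ := by
      refine span_le.mpr ?_
      rintro _ ⟨k, rfl⟩
      have hk : ⟪x, w (a k)⟫ = 0 :=
        inner_left_of_mem_orthogonal (subset_span (Set.mem_range_self k)) hx
      rw [SetLike.mem_coe, mem_orthogonal_singleton_iff_inner_right, Function.comp_apply,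
        inner_outerVec, hk, zero_mul]
    rw [hspan] at hle
    have hj :=
      mem_orthogonal_singleton_iff_inner_right.mp (hle (subset_span (Set.mem_range_self j)))
    rw [inner_outerVec, inner_mul_inner_swap_eq_sq_norm] at hj
    simpa using hj
  rw [← orthogonal_eq_bot_iff, eq_bot_iff]
  intro x hx
  have hle : span ℂ (Set.range w) ≤ (ℂ ∙ x)ᗮ := span_le.mpr <| by
    rintro _ ⟨j, rfl⟩
    rw [SetLike.mem_coe, mem_orthogonal_singleton_iff_inner_right]
    exact hperp x hx j
  rw [hw, top_le_iff, orthogonal_eq_top_iff, span_singleton_eq_bot] at hle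
  exact hle

lemma finrank_span_identityVec [Nonempty ι] :
    finrank ℂ (ℂ ∙ (identityVec : EuclideanSpace ℂ (ι × ι))) = 1 := by
  refine finrank_span_singleton fun h0 => ?_
  have := inner_identityVec_identityVec (ι := ι)
  rw [h0, inner_zero_left] at this
  exact Fintype.card_ne_zero (Nat.cast_eq_zero.mp this.symm)

lemma card_le_finrank_span_tracelessOuterVec_add_one {J : Type*} [Nonempty ι]
    {w : J → EuclideanSpace ℂ ι} (hw : span ℂ (Set.range w) = ⊤) :
    Fintype.card ι ≤ finrank ℂ (span ℂ (Set.range fun j => tracelessOuterVec (w j))) + 1 := by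
  set U := span ℂ (Set.range fun j => tracelessOuterVec (w j))
  calc Fintype.card ι ≤ finrank ℂ (span ℂ (Set.range fun j => outerVec (w j))) :=
        card_le_finrank_span_outerVec hw
    _ ≤ finrank ℂ (U ⊔ ℂ ∙ identityVec : Submodule ℂ _) := by
        refine Submodule.finrank_mono (span_le.mpr ?_)
        rintro _ ⟨j, rfl⟩
        show outerVec (w j) ∈ U ⊔ ℂ ∙ identityVec
        rw [← sub_add_cancel (outerVec (w j)) ((Fintype.card ι : ℂ)⁻¹ • identityVec)]
        exact add_mem (mem_sup_left (subset_span ⟨j, rfl⟩))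
          (mem_sup_right (smul_mem _ _ (mem_span_singleton_self _)))
    _ ≤ finrank ℂ U + 1 := by
        rw [← finrank_span_identityVec (ι := ι)]
        exact Submodule.finrank_add_le_finrank_add_finrank _ _

theorem card_le_card_add_one_of_unbiased {β J : Type*} [Fintype β]
    (hι : 2 ≤ Fintype.card ι) (w : β → J → EuclideanSpace ℂ ι) (hw : ∀ b j, ‖w b j‖ = 1)
    (hspan : ∀ b, span ℂ (Set.range (w b)) = ⊤)
    (hMU : ∀ b b', b ≠ b' → ∀ i j, ‖⟪w b i, w b' j⟫‖ ^ 2 = 1 / Fintype.card ι) :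
    Fintype.card β ≤ Fintype.card ι + 1 := by
  have : Nonempty ι := Fintype.card_pos_iff.mp (by omega)
  let U : β → Submodule ℂ (EuclideanSpace ℂ (ι × ι)) := fun b =>
    span ℂ (Set.range fun j => tracelessOuterVec (w b j))
  let V : Option β → Submodule ℂ (EuclideanSpace ℂ (ι × ι)) := fun o =>
    o.elim (ℂ ∙ identityVec) U
  have hV : OrthogonalFamily ℂ (fun o => V o) fun o => (V o).subtypeₗᵢ := by
    rw [orthogonalFamily_iff_pairwise]
    rintro (_ | b) (_ | b') hne
    · exact absurd rfl hne
    all_goals simp only [Function.onFun, V, U, Option.elim, isOrtho_span]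
    · rintro _ rfl _ ⟨j, rfl⟩
      exact inner_identityVec_tracelessOuterVec (hw _ _)
    · rintro _ ⟨j, rfl⟩ _ rfl
      rw [inner_eq_zero_symm]
      exact inner_identityVec_tracelessOuterVec (hw _ _)
    · rintro _ ⟨i, rfl⟩ _ ⟨j, rfl⟩
      exact inner_tracelessOuterVec_eq_zero (hw _ _) (hw _ _)
        (hMU b b' (fun h => hne (congrArg some h)) i j)
  have hsum := hV.sum_finrank_le
  rw [Fintype.sum_option, finrank_euclideanSpace, Fintype.card_prod] at hsum
  change finrank ℂ (ℂ ∙ identityVec) + ∑ b, finrank ℂ (U b) ≤ _ at hsum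
  rw [finrank_span_identityVec] at hsum
  have hsumU := Finset.card_nsmul_le_sum Finset.univ _ _ fun b _ =>
    card_le_finrank_span_tracelessOuterVec_add_one (hspan b)
  simp only [Finset.card_univ, smul_eq_mul, Finset.sum_add_distrib, Finset.sum_const,
    mul_one] at hsumU
  nlinarith

end MutuallyUnbiased

noncomputable def headTailIsometry {n : ℕ} (D : Fin (n + 1) → ℕ) :
    EuclideanSpace ℂ ((r : Fin (n + 1)) → Fin (D r)) ≃ₗᵢ[ℂ]
      EuclideanSpace ℂ (Fin (D 0) × ((r : Fin n) → Fin (D r.succ))) :=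
  LinearIsometryEquiv.piLpCongrLeft 2 ℂ ℂ (Fin.consEquiv fun r => Fin (D r)).symm

lemma headTailIsometry_eprodPi {n : ℕ} {D : Fin (n + 1) → ℕ}
    (x : (r : Fin (n + 1)) → EuclideanSpace ℂ (Fin (D r))) :
    headTailIsometry D (eprodPi x) = tensorVec (x 0) (eprodPi fun r => x r.succ) := by
  ext p
  simp [headTailIsometry, LinearIsometryEquiv.piLpCongrLeft_apply, eprodPi, tensorVec,
    Fin.prod_univ_succ]

theorem MU_product_bases_upper_bound_general {n : ℕ} {D : Fin (n + 1) → ℕ}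
    (hD : ∀ r, 2 ≤ D r)
    {m : ℕ}
    (ψ : Fin m → Fin (∏ r, D r) → (r : Fin (n + 1)) → EuclideanSpace ℂ (Fin (D r)))
    (hψ : ∀ b i r, ‖ψ b i r‖ = 1)
    (hON : ∀ b, Orthonormal ℂ (fun i => eprodPi (ψ b i)))
    (hMU : ∀ b b', b ≠ b' → ∀ i j,
      ‖⟪eprodPi (ψ b i), eprodPi (ψ b' j)⟫‖ ^ 2 = 1 / ((∏ r, D r : ℕ) : ℝ)) :
    m ≤ D 0 + 1 := by
  let tail : Fin m → Fin (∏ r, D r) → EuclideanSpace ℂ ((r : Fin n) → Fin (D r.succ)) :=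
    fun b i => eprodPi fun r => ψ b i r.succ
  have hsplit : ∀ b i, headTailIsometry D (eprodPi (ψ b i)) = tensorVec (ψ b i 0) (tail b i) :=
    fun b i => headTailIsometry_eprodPi (ψ b i)
  have hcard : Fintype.card (Fin (∏ r, D r)) =
      Fintype.card (Fin (D 0)) * Fintype.card ((r : Fin n) → Fin (D r.succ)) := by
    simp [Fin.prod_univ_succ]
  have hframe : ∀ b, IsTightFrame 1 fun i => tensorVec (ψ b i 0) (tail b i) := fun b => by
    simpa only [hsplit] using
      ((hON b).isTightFrame_one (by simp)).map (headTailIsometry D)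
  have htail : ∀ b i, ‖tail b i‖ = 1 := fun b i => by
    have := (hON b).1 i
    rwa [← (headTailIsometry D).norm_map, hsplit, norm_tensorVec, hψ, one_mul] at this
  have hunbiased : ∀ b b', b ≠ b' → ∀ i j,
      ‖⟪ψ b i 0, ψ b' j 0⟫‖ ^ 2 = 1 / Fintype.card (Fin (D 0)) := fun b b' hne i =>
    sq_norm_inner_eq_of_unbiased_tensorVec (hframe b') (fun j => hψ b' j 0) (htail b') hcard
      (hψ b i 0) (htail b i) fun j => by
        simpa [← hsplit, LinearIsometryEquiv.inner_map_map] using hMU b b' hne i j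
  have : Nonempty ((r : Fin n) → Fin (D r.succ)) := ⟨fun r => ⟨0, by have := hD r.succ; omega⟩⟩
  have hspan : ∀ b, span ℂ (Set.range fun i => ψ b i 0) = ⊤ := fun b =>
    ((hframe b).of_tensorVec_left (htail b)).span_eq_top (by positivity)
  simpa using card_le_card_add_one_of_unbiased (by simpa using hD 0) (fun b i => ψ b i 0)
    (fun b i => hψ b i 0) hspan hunbiased

/-- If `d = d₁d₂⋯d_n` with `d₁ = 2` or `d₁ = 3` and `d₁ ≤ d_r` for all `r`, then any
collection of pairwise mutually unbiased orthonormal product bases of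
`ℂ^{d₁} ⊗ ⋯ ⊗ ℂ^{d_n}` contains at most `d₁ + 1` bases. -/
theorem MU_product_bases_upper_bound {n : ℕ} {D : Fin (n + 1) → ℕ}
    (hD : ∀ r, 2 ≤ D r) (hd₁ : D 0 = 2 ∨ D 0 = 3) (hle : ∀ r, D 0 ≤ D r)
    {m : ℕ}
    (ψ : Fin m → Fin (∏ r, D r) → (r : Fin (n + 1)) → EuclideanSpace ℂ (Fin (D r)))
    (hψ : ∀ b i r, ‖ψ b i r‖ = 1)
    (hON : ∀ b, Orthonormal ℂ (fun i => eprodPi (ψ b i)))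
    (hMU : ∀ b b', b ≠ b' → ∀ i j,
      ‖⟪eprodPi (ψ b i), eprodPi (ψ b' j)⟫‖ ^ 2 = 1 / ((∏ r, D r : ℕ) : ℝ)) :
    m ≤ D 0 + 1 :=
  MU_product_bases_upper_bound_general hD ψ hψ hON hMU
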